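/- Let H be a real Hilbert space, T > 0, α ∈ (1/2, 1), y₀ ∈ H, and let f : [0,T] × H → H satisfy ‖f(t,x) − f(t,y)‖² ≤ ρ(‖x − y‖²) for all t ∈ [0,T] and x, y ∈ H, where ρ : [0,∞) → [0,∞) is continuous, non-decreasing, ρ(0) = 0, ρ(u) > 0 for u > 0, and ∫₀¹ du/ρ(u) = ∞. If x, y : [0,T] → H are two continuous functions both satisfying z(t) = y₀ + (1/Γ(α)) ∫₀ᵗ (t−s)^{α−1} f(s, z(s)) ds for all t ∈ [0,T] (and s ↦ ‖f(s,x(s))‖², s ↦ ‖f(s,y(s))‖² are integrable), then x(t) = y(t) for all t ∈ [0,T]. -/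

import Mathlib

/-!
Subtracting the two Volterra equations and applying the Cauchy–Schwarz inequality against the
kernel `(t - s) ^ (α - 1)`, which is square integrable precisely because `α > 1/2`, gives for
`φ = ‖x - y‖ ^ 2` the integral inequality `φ t ≤ C ∫₀ᵗ ρ (φ s) ds`. Osgood's lemma then forces
`φ = 0`: if `φ t₁ > 0`, the right-hand side `ψ` satisfies `ψ' ≤ C ρ (ψ)`, so the change of
variables `u = ψ s` bounds `∫ u in ε..ψ t₁, 1 / ρ u` by `C T` for every level `ε ∈ (0, ψ t₁]`,
which contradicts `∫₀¹ du / ρ u = ∞`.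
-/

open MeasureTheory Set

section CauchySchwarz

variable {X E : Type*} [MeasurableSpace X] [NormedAddCommGroup E] [NormedSpace ℝ E]

theorem norm_integral_smul_sq_le {μ : Measure X} {k : X → ℝ} {g : X → E}
    (hk : MemLp k 2 μ) (hg : MemLp g 2 μ) :
    ‖∫ a, k a • g a ∂μ‖ ^ 2 ≤ (∫ a, k a ^ 2 ∂μ) * ∫ a, ‖g a‖ ^ 2 ∂μ := by
  have hp : ENNReal.ofReal 2 = 2 := by norm_num
  have hCS := integral_mul_le_Lp_mul_Lq_of_nonneg Real.HolderConjugate.two_two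
    (Filter.Eventually.of_forall fun a => abs_nonneg (k a))
    (Filter.Eventually.of_forall fun a => norm_nonneg (g a))
    (hp ▸ hk.abs) (hp ▸ hg.norm)
  simp only [Real.rpow_two, sq_abs] at hCS
  have hk2 : 0 ≤ ∫ a, k a ^ 2 ∂μ := integral_nonneg fun a => sq_nonneg _
  have hg2 : 0 ≤ ∫ a, ‖g a‖ ^ 2 ∂μ := integral_nonneg fun a => sq_nonneg _
  calc ‖∫ a, k a • g a ∂μ‖ ^ 2 ≤ (∫ a, |k a| * ‖g a‖ ∂μ) ^ 2 := by
        gcongr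
        simpa only [norm_smul, Real.norm_eq_abs] using
          norm_integral_le_integral_norm (μ := μ) fun a => k a • g a
    _ ≤ ((∫ a, k a ^ 2 ∂μ) ^ (1 / 2 : ℝ) * (∫ a, ‖g a‖ ^ 2 ∂μ) ^ (1 / 2 : ℝ)) ^ 2 := by
        gcongr
    _ = (∫ a, k a ^ 2 ∂μ) * ∫ a, ‖g a‖ ^ 2 ∂μ := by
        rw [mul_pow, ← Real.rpow_two, ← Real.rpow_two, ← Real.rpow_mul hk2,
          ← Real.rpow_mul hg2]
        norm_num

end CauchySchwarz

section RiemannLiouville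

variable {E : Type*} [NormedAddCommGroup E] [NormedSpace ℝ E] {α t : ℝ}

theorem sub_rpow_sq {s : ℝ} (hs : s ≤ t) :
    ((t - s) ^ (α - 1)) ^ 2 = (t - s) ^ (2 * α - 2) := by
  rw [← Real.rpow_mul_natCast (sub_nonneg.2 hs)]
  ring_nf

theorem intervalIntegrable_sub_rpow {r : ℝ} (hr : -1 < r) :
    IntervalIntegrable (fun s => (t - s) ^ r) volume 0 t := by
  simpa using
    ((intervalIntegral.intervalIntegrable_rpow' (a := 0) (b := t) hr).comp_sub_left t).symm

theorem memLp_two_sub_rpow (hα : 1 / 2 < α) :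
    MemLp (fun s => (t - s) ^ (α - 1)) 2 (volume.restrict (Ioc 0 t)) := by
  refine (memLp_two_iff_integrable_sq
    ((measurable_const.sub measurable_id).pow_const _).aestronglyMeasurable).2 ?_
  exact (intervalIntegrable_sub_rpow (by linarith : -1 < 2 * α - 2)).1.congr_fun
    (fun s hs => (sub_rpow_sq hs.2).symm) measurableSet_Ioc

theorem integral_sub_rpow_sq (hα : 1 / 2 < α) (ht : 0 ≤ t) :
    ∫ s in (0 : ℝ)..t, ((t - s) ^ (α - 1)) ^ 2 = t ^ (2 * α - 1) / (2 * α - 1) := by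
  rw [intervalIntegral.integral_congr fun s hs => sub_rpow_sq (α := α) (uIcc_of_le ht ▸ hs).2,
    intervalIntegral.integral_comp_sub_left (fun u => u ^ (2 * α - 2)) t,
    integral_rpow (Or.inl (by linarith))]
  simp only [sub_self, sub_zero, Real.zero_rpow (by linarith : 2 * α - 2 + 1 ≠ 0)]
  ring_nf

theorem intervalIntegrable_sub_rpow_smul (hα : 1 / 2 < α) (ht : 0 ≤ t) {g : ℝ → E}
    (hg : MemLp g 2 (volume.restrict (Ioc 0 t))) :
    IntervalIntegrable (fun s => (t - s) ^ (α - 1) • g s) volume 0 t :=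
  (intervalIntegrable_iff_integrableOn_Ioc_of_le ht).2
    (memLp_one_iff_integrable.1 (hg.smul (memLp_two_sub_rpow hα) (r := 1)))

theorem norm_integral_sub_rpow_smul_sq_le (hα : 1 / 2 < α) (ht : 0 ≤ t) {g : ℝ → E}
    (hg : MemLp g 2 (volume.restrict (Ioc 0 t))) :
    ‖∫ s in (0 : ℝ)..t, (t - s) ^ (α - 1) • g s‖ ^ 2
      ≤ t ^ (2 * α - 1) / (2 * α - 1) * ∫ s in (0 : ℝ)..t, ‖g s‖ ^ 2 := by
  rw [← integral_sub_rpow_sq hα ht]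
  simp only [intervalIntegral.integral_of_le ht]
  exact norm_integral_smul_sq_le (memLp_two_sub_rpow hα) hg

noncomputable def riemannLiouvilleIntegral (α : ℝ) (g : ℝ → E) (t : ℝ) : E :=
  (1 / Real.Gamma α) • ∫ s in (0:ℝ)..t, (t - s) ^ (α - 1) • g s

theorem riemannLiouvilleIntegral_sub (hα : 1 / 2 < α) (ht : 0 ≤ t) {u v : ℝ → E}
    (hu : MemLp u 2 (volume.restrict (Ioc 0 t))) (hv : MemLp v 2 (volume.restrict (Ioc 0 t))) :
    riemannLiouvilleIntegral α u t - riemannLiouvilleIntegral α v t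
      = riemannLiouvilleIntegral α (fun s => u s - v s) t := by
  simp only [riemannLiouvilleIntegral, ← smul_sub,
    ← intervalIntegral.integral_sub (intervalIntegrable_sub_rpow_smul hα ht hu)
      (intervalIntegrable_sub_rpow_smul hα ht hv)]

theorem sq_norm_riemannLiouvilleIntegral_le (hα : 1 / 2 < α) (ht : 0 ≤ t) {g : ℝ → E}
    (hg : MemLp g 2 (volume.restrict (Ioc 0 t))) :
    ‖riemannLiouvilleIntegral α g t‖ ^ 2
      ≤ (1 / Real.Gamma α) ^ 2 * (t ^ (2 * α - 1) / (2 * α - 1))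
        * ∫ s in (0:ℝ)..t, ‖g s‖ ^ 2 := by
  rw [riemannLiouvilleIntegral, norm_smul, mul_pow, Real.norm_eq_abs, sq_abs, mul_assoc]
  gcongr
  exact norm_integral_sub_rpow_smul_sq_le hα ht hg

theorem sq_norm_riemannLiouvilleIntegral_sub_le (hα : 1 / 2 < α) (ht : 0 ≤ t) {u v : ℝ → E}
    (hu : MemLp u 2 (volume.restrict (Ioc 0 t))) (hv : MemLp v 2 (volume.restrict (Ioc 0 t)))
    {w : ℝ → ℝ} (hw : IntervalIntegrable w volume 0 t)
    (huv : ∀ s ∈ Icc 0 t, ‖u s - v s‖ ^ 2 ≤ w s) :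
    ‖riemannLiouvilleIntegral α u t - riemannLiouvilleIntegral α v t‖ ^ 2
      ≤ (1 / Real.Gamma α) ^ 2 * (t ^ (2 * α - 1) / (2 * α - 1)) * ∫ s in (0:ℝ)..t, w s := by
  have huv_sq : IntervalIntegrable (fun s => ‖u s - v s‖ ^ 2) volume 0 t :=
    (intervalIntegrable_iff_integrableOn_Ioc_of_le ht).2
      ((memLp_two_iff_integrable_sq_norm (hu.sub hv).1).1 (hu.sub hv))
  rw [riemannLiouvilleIntegral_sub hα ht hu hv]
  refine (sq_norm_riemannLiouvilleIntegral_le hα ht (hu.sub hv)).trans ?_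
  have : 0 ≤ t ^ (2 * α - 1) / (2 * α - 1) := div_nonneg (Real.rpow_nonneg ht _) (by linarith)
  gcongr
  exact intervalIntegral.integral_mono_on ht huv_sq hw huv

end RiemannLiouville

theorem hasDerivAt_integral_of_continuousOn {E : Type*} [NormedAddCommGroup E]
    [NormedSpace ℝ E] [CompleteSpace E] {g : ℝ → E} {a b s : ℝ}
    (hg : ContinuousOn g (Icc a b)) (hs : s ∈ Ioo a b) :
    HasDerivAt (fun t => ∫ u in a..t, g u) (g s) s :=
  intervalIntegral.integral_hasDerivAt_right
    ((hg.mono (Icc_subset_Icc_right hs.2.le)).intervalIntegrable_of_Icc hs.1.le)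
    ((hg.mono Ioo_subset_Icc_self).stronglyMeasurableAtFilter isOpen_Ioo s hs)
    (hg.continuousAt (Icc_mem_nhds hs.1 hs.2))

section Osgood

variable {ρ : ℝ → ℝ}

theorem continuousOn_one_div_of_pos (hρ_cont : ContinuousOn ρ (Ioi 0))
    (hρ_pos : ∀ u : ℝ, 0 < u → 0 < ρ u) : ContinuousOn (fun u => 1 / ρ u) (Ioi 0) :=
  continuousOn_const.div hρ_cont fun u hu => (hρ_pos u hu).ne'

theorem not_integrableOn_Ioc_one_div_of_osgood (hρ_cont : ContinuousOn ρ (Ioi 0))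
    (hρ_pos : ∀ u : ℝ, 0 < u → 0 < ρ u)
    (hOsgood : ∫⁻ u in Ioc (0:ℝ) 1, ENNReal.ofReal (1 / ρ u) = ⊤) {b : ℝ} (hb : 0 < b) :
    ¬ IntegrableOn (fun u => 1 / ρ u) (Ioc 0 b) := by
  intro hint
  have htail : IntegrableOn (fun u => 1 / ρ u) (Ioc b 1) :=
    ((continuousOn_one_div_of_pos hρ_cont hρ_pos).mono fun u hu => hb.trans_le hu.1)
      |>.integrableOn_Icc.mono_set Ioc_subset_Icc_self
  exact ((hint.union htail).mono_set Ioc_subset_Ioc_union_Ioc).lintegral_lt_top.ne hOsgood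

theorem exists_lt_integral_one_div_of_osgood (hρ_cont : ContinuousOn ρ (Ioi 0))
    (hρ_pos : ∀ u : ℝ, 0 < u → 0 < ρ u)
    (hOsgood : ∫⁻ u in Ioc (0:ℝ) 1, ENNReal.ofReal (1 / ρ u) = ⊤)
    {b : ℝ} (hb : 0 < b) (M : ℝ) :
    ∃ ε ∈ Ioc 0 b, M < ∫ u in ε..b, 1 / ρ u := by
  by_contra! hbdd
  set ε : ℕ → ℝ := fun n => b * (1 / ((n : ℝ) + 1))
  have hε : ∀ n, ε n ∈ Ioc 0 b := fun n =>
    ⟨by positivity, mul_le_of_le_one_right hb.le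
      ((div_le_one (by positivity)).2 (by simp))⟩
  have hε_lim : Filter.Tendsto ε Filter.atTop (nhds 0) := by
    simpa only [mul_zero] using tendsto_one_div_add_atTop_nhds_zero_nat.const_mul b
  refine not_integrableOn_Ioc_one_div_of_osgood hρ_cont hρ_pos hOsgood hb
    (integrableOn_Ioc_of_intervalIntegral_norm_bounded_left (I := M) (a := ε) (fun n => ?_)
      hε_lim
      (Filter.Eventually.of_forall fun n => ?_))
  · exact ((continuousOn_one_div_of_pos hρ_cont hρ_pos).mono fun u hu => (hε n).1.trans_le hu.1)
      |>.integrableOn_Icc.mono_set Ioc_subset_Icc_self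
  · rw [← intervalIntegral.integral_of_le (hε n).2]
    refine le_trans (le_of_eq (intervalIntegral.integral_congr fun u hu => ?_)) (hbdd _ (hε n))
    rw [uIcc_of_le (hε n).2] at hu
    exact Real.norm_of_nonneg (one_div_nonneg.2 (hρ_pos u ((hε n).1.trans_le hu.1)).le)

theorem integral_one_div_comp_le {ψ ψ' : ℝ → ℝ} {a b C : ℝ} (hab : a ≤ b)
    (hψ : ContinuousOn ψ (Icc a b)) (hψ' : ∀ s ∈ Ioo a b, HasDerivAt ψ (ψ' s) s)
    (hψ'_cont : ContinuousOn ψ' (Icc a b)) (hρ_cont : ContinuousOn ρ (ψ '' Icc a b))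
    (hρ_pos : ∀ s ∈ Icc a b, 0 < ρ (ψ s))
    (hψ'_le : ∀ s ∈ Icc a b, ψ' s ≤ C * ρ (ψ s)) :
    ∫ u in ψ a..ψ b, 1 / ρ u ≤ C * (b - a) := by
  rw [← uIcc_of_le hab] at hψ hψ'_cont hρ_cont
  have hinv : ContinuousOn (fun u => 1 / ρ u) (ψ '' uIcc a b) :=
    continuousOn_const.div hρ_cont fun u ⟨s, hs, hsu⟩ =>
      hsu ▸ (hρ_pos s (uIcc_of_le hab ▸ hs)).ne'
  rw [← intervalIntegral.integral_deriv_smul_comp'' hψ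
    (fun s hs => (hψ' s (by rwa [min_eq_left hab, max_eq_right hab] at hs)).hasDerivWithinAt)
    hψ'_cont hinv]
  calc ∫ s in a..b, ψ' s • ((fun u => 1 / ρ u) ∘ ψ) s ≤ ∫ _ in a..b, C := by
        refine intervalIntegral.integral_mono_on hab
          ((hψ'_cont.smul (hinv.comp hψ (mapsTo_image ψ _))).intervalIntegrable)
          intervalIntegrable_const fun s hs => ?_
        rw [smul_eq_mul, Function.comp_apply, mul_one_div, div_le_iff₀ (hρ_pos s hs)]
        exact hψ'_le s hs
    _ = C * (b - a) := by simp [mul_comm]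

theorem eq_zero_of_le_mul_integral_of_osgood {φ : ℝ → ℝ} {C T : ℝ} (hC : 0 ≤ C)
    (hρ_nonneg : ∀ u ∈ Ici (0:ℝ), 0 ≤ ρ u) (hρ_cont : ContinuousOn ρ (Ici 0))
    (hρ_mono : MonotoneOn ρ (Ici 0)) (hρ_pos : ∀ u : ℝ, 0 < u → 0 < ρ u)
    (hOsgood : ∫⁻ u in Ioc (0:ℝ) 1, ENNReal.ofReal (1 / ρ u) = ⊤)
    (hφ_cont : ContinuousOn φ (Icc 0 T)) (hφ_nonneg : ∀ t ∈ Icc (0:ℝ) T, 0 ≤ φ t)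
    (hφ_le : ∀ t ∈ Icc (0:ℝ) T, φ t ≤ C * ∫ s in (0:ℝ)..t, ρ (φ s)) :
    ∀ t ∈ Icc (0:ℝ) T, φ t = 0 := by
  intro t₁ ht₁
  by_contra hne
  have hsub : Icc 0 t₁ ⊆ Icc 0 T := Icc_subset_Icc_right ht₁.2
  have hg_cont : ContinuousOn (fun s => ρ (φ s)) (Icc 0 t₁) :=
    hρ_cont.comp (hφ_cont.mono hsub) fun s hs => hφ_nonneg s (hsub hs)
  set ψ : ℝ → ℝ := fun t => C * ∫ s in (0:ℝ)..t, ρ (φ s) with hψ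
  have hψ_cont : ContinuousOn ψ (Icc 0 t₁) := by
    have := intervalIntegral.continuousOn_primitive_interval (μ := volume)
      (uIcc_of_le ht₁.1 ▸ hg_cont.integrableOn_Icc)
    exact continuousOn_const.mul (uIcc_of_le ht₁.1 ▸ this)
  have hψ_deriv : ∀ s ∈ Ioo 0 t₁, HasDerivAt ψ (C * ρ (φ s)) s := fun s hs =>
    (hasDerivAt_integral_of_continuousOn hg_cont hs).const_mul C
  have hψ_mono : MonotoneOn ψ (Icc 0 t₁) := by
    refine monotoneOn_of_hasDerivWithinAt_nonneg (f' := fun s => C * ρ (φ s))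
      (convex_Icc 0 t₁) hψ_cont (fun s hs => ?_) fun s hs => ?_ <;> rw [interior_Icc] at hs
    · exact (hψ_deriv s hs).hasDerivWithinAt
    · exact mul_nonneg hC (hρ_nonneg _ (hφ_nonneg s (hsub (Ioo_subset_Icc_self hs))))
  have hψ_pos : 0 < ψ t₁ := ((hφ_nonneg t₁ ht₁).lt_of_ne' hne).trans_le (hφ_le t₁ ht₁)
  obtain ⟨ε, hε, hlt⟩ := exists_lt_integral_one_div_of_osgood
    (hρ_cont.mono Ioi_subset_Ici_self) hρ_pos hOsgood hψ_pos (C * T)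
  obtain ⟨t₀, ht₀, hψt₀⟩ := intermediate_value_Icc ht₁.1 hψ_cont
    (show ε ∈ Icc (ψ 0) (ψ t₁) by simpa [hψ] using ⟨hε.1.le, hε.2⟩)
  have hsub₀ : Icc t₀ t₁ ⊆ Icc 0 t₁ := Icc_subset_Icc_left ht₀.1
  have hψ_ge : ∀ s ∈ Icc t₀ t₁, ε ≤ ψ s := fun s hs =>
    hψt₀ ▸ hψ_mono (hsub₀ (left_mem_Icc.2 ht₀.2)) (hsub₀ hs) hs.1
  have hle := integral_one_div_comp_le ht₀.2 (hψ_cont.mono hsub₀)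
    (fun s hs => hψ_deriv s ⟨ht₀.1.trans_lt hs.1, hs.2⟩)
    ((continuousOn_const.mul hg_cont).mono hsub₀)
    (hρ_cont.mono (image_subset_iff.2 fun s hs => hε.1.le.trans (hψ_ge s hs)))
    (fun s hs => hρ_pos _ (hε.1.trans_le (hψ_ge s hs)))
    fun s hs => mul_le_mul_of_nonneg_left (hρ_mono (hφ_nonneg s (hsub (hsub₀ hs)))
      ((hφ_nonneg s (hsub (hsub₀ hs))).trans (hφ_le s (hsub (hsub₀ hs))))
      (hφ_le s (hsub (hsub₀ hs)))) hC
  rw [hψt₀] at hle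
  have hCT : C * (t₁ - t₀) ≤ C * T :=
    mul_le_mul_of_nonneg_left (by linarith [ht₀.1, ht₁.2]) hC
  linarith

end Osgood

theorem stmt6_general {H : Type*} [NormedAddCommGroup H] [InnerProductSpace ℝ H]
    (T α : ℝ) (hT : 0 < T) (hα : α ∈ Ioo (1 / 2 : ℝ) 1)
    (y₀ : H) (f : ℝ → H → H)
    (ρ : ℝ → ℝ)
    (hρ_nonneg : ∀ u ∈ Ici (0:ℝ), 0 ≤ ρ u)
    (hρ_cont : ContinuousOn ρ (Ici 0))
    (hρ_mono : MonotoneOn ρ (Ici 0))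
    (hρ_pos : ∀ u : ℝ, 0 < u → 0 < ρ u)
    (hOsgood : ∫⁻ u in Ioc (0:ℝ) 1, ENNReal.ofReal (1 / ρ u) = ⊤)
    (hfρ : ∀ t ∈ Icc (0:ℝ) T, ∀ u v : H, ‖f t u - f t v‖ ^ 2 ≤ ρ (‖u - v‖ ^ 2))
    (x y : ℝ → H)
    (hx_cont : ContinuousOn x (Icc 0 T))
    (hy_cont : ContinuousOn y (Icc 0 T))
    (hfx_meas : AEStronglyMeasurable (fun s => f s (x s)) (volume.restrict (Ioc 0 T)))
    (hfy_meas : AEStronglyMeasurable (fun s => f s (y s)) (volume.restrict (Ioc 0 T)))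
    (hfx_int : IntegrableOn (fun s => ‖f s (x s)‖ ^ 2) (Ioc 0 T))
    (hfy_int : IntegrableOn (fun s => ‖f s (y s)‖ ^ 2) (Ioc 0 T))
    (hx : ∀ t ∈ Icc (0:ℝ) T,
      x t = y₀ + (1 / Real.Gamma α) • ∫ s in (0:ℝ)..t, (t - s) ^ (α - 1) • f s (x s))
    (hy : ∀ t ∈ Icc (0:ℝ) T,
      y t = y₀ + (1 / Real.Gamma α) • ∫ s in (0:ℝ)..t, (t - s) ^ (α - 1) • f s (y s)) :
    ∀ t ∈ Icc (0:ℝ) T, x t = y t := by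
  obtain ⟨hα, -⟩ := hα
  have h2α : 0 < 2 * α - 1 := by linarith
  have hfx := (memLp_two_iff_integrable_sq_norm hfx_meas).2 hfx_int
  have hfy := (memLp_two_iff_integrable_sq_norm hfy_meas).2 hfy_int
  have hφ_cont : ContinuousOn (fun s => ‖x s - y s‖ ^ 2) (Icc 0 T) :=
    (hx_cont.sub hy_cont).norm.pow 2
  have hφ_le : ∀ t ∈ Icc (0:ℝ) T, ‖x t - y t‖ ^ 2
      ≤ (1 / Real.Gamma α) ^ 2 * (T ^ (2 * α - 1) / (2 * α - 1))
        * ∫ s in (0:ℝ)..t, ρ (‖x s - y s‖ ^ 2) := by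
    intro t ht
    have hrestrict : volume.restrict (Ioc 0 t) ≤ volume.restrict (Ioc 0 T) :=
      Measure.restrict_mono (Ioc_subset_Ioc_right ht.2) le_rfl
    have hρφ_cont := hρ_cont.comp hφ_cont fun s _ => sq_nonneg ‖x s - y s‖
    calc ‖x t - y t‖ ^ 2
        = ‖riemannLiouvilleIntegral α (fun s => f s (x s)) t
            - riemannLiouvilleIntegral α (fun s => f s (y s)) t‖ ^ 2 := by
          rw [hx t ht, hy t ht, add_sub_add_left_eq_sub, riemannLiouvilleIntegral,
            riemannLiouvilleIntegral]
      _ ≤ (1 / Real.Gamma α) ^ 2 * (t ^ (2 * α - 1) / (2 * α - 1))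
          * ∫ s in (0:ℝ)..t, ρ (‖x s - y s‖ ^ 2) :=
          sq_norm_riemannLiouvilleIntegral_sub_le hα ht.1 (hfx.mono_measure hrestrict)
            (hfy.mono_measure hrestrict)
            ((hρφ_cont.mono (Icc_subset_Icc_right ht.2)).intervalIntegrable_of_Icc ht.1)
            fun s hs => hfρ s ⟨hs.1, hs.2.trans ht.2⟩ _ _
      _ ≤ _ := by
          gcongr
          · exact intervalIntegral.integral_nonneg ht.1 fun s hs =>
              hρ_nonneg _ (sq_nonneg ‖x s - y s‖)
          exacts [ht.1, ht.2]
  intro t ht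
  simpa [sub_eq_zero] using eq_zero_of_le_mul_integral_of_osgood
    (mul_nonneg (sq_nonneg _) (div_nonneg (Real.rpow_nonneg hT.le _) h2α.le))
    hρ_nonneg hρ_cont hρ_mono hρ_pos hOsgood hφ_cont (fun _ _ => sq_nonneg _) hφ_le t ht

/-- Theorem 3.1, uniqueness part (deterministic part of the equation): under the
Osgood-type non-Lipschitz condition (A2), any two continuous solutions of the
fractional Volterra integral equation of order `α ∈ (1/2, 1)` coincide on `[0, T]`. -/
theorem stmt6 {H : Type*} [NormedAddCommGroup H] [InnerProductSpace ℝ H] [CompleteSpace H]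
    (T α : ℝ) (hT : 0 < T) (hα : α ∈ Ioo (1 / 2 : ℝ) 1)
    (y₀ : H) (f : ℝ → H → H)
    (ρ : ℝ → ℝ)
    (hρ_nonneg : ∀ u ∈ Ici (0:ℝ), 0 ≤ ρ u)
    (hρ_cont : ContinuousOn ρ (Ici 0))
    (hρ_mono : MonotoneOn ρ (Ici 0))
    (hρ_zero : ρ 0 = 0)
    (hρ_pos : ∀ u : ℝ, 0 < u → 0 < ρ u)
    (hOsgood : ∫⁻ u in Ioc (0:ℝ) 1, ENNReal.ofReal (1 / ρ u) = ⊤)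
    (hfρ : ∀ t ∈ Icc (0:ℝ) T, ∀ u v : H, ‖f t u - f t v‖ ^ 2 ≤ ρ (‖u - v‖ ^ 2))
    (x y : ℝ → H)
    (hx_cont : ContinuousOn x (Icc 0 T))
    (hy_cont : ContinuousOn y (Icc 0 T))
    (hfx_meas : AEStronglyMeasurable (fun s => f s (x s)) (volume.restrict (Ioc 0 T)))
    (hfy_meas : AEStronglyMeasurable (fun s => f s (y s)) (volume.restrict (Ioc 0 T)))
    (hfx_int : IntegrableOn (fun s => ‖f s (x s)‖ ^ 2) (Ioc 0 T))
    (hfy_int : IntegrableOn (fun s => ‖f s (y s)‖ ^ 2) (Ioc 0 T))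
    (hx : ∀ t ∈ Icc (0:ℝ) T,
      x t = y₀ + (1 / Real.Gamma α) • ∫ s in (0:ℝ)..t, (t - s) ^ (α - 1) • f s (x s))
    (hy : ∀ t ∈ Icc (0:ℝ) T,
      y t = y₀ + (1 / Real.Gamma α) • ∫ s in (0:ℝ)..t, (t - s) ^ (α - 1) • f s (y s)) :
    ∀ t ∈ Icc (0:ℝ) T, x t = y t :=
  stmt6_general T α hT hα y₀ f ρ hρ_nonneg hρ_cont hρ_mono hρ_pos hOsgood hfρ x y hx_cont hy_cont
    hfx_meas hfy_meas hfx_int hfy_int hx hy
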